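/- The Duhamel (canonical) correlation of the reduced symmetry generator equals ∫₀^β Tr(ρ_λ · σ̂^z · exp(−u·h_λ) · σ̂^z · exp(u·h_λ)) du = (|λ|²/μ³)·tanh(βμ). In particular, if λ ≠ 0 satisfies the gap equation tanh(βμ) = 2μ, this quantization parameter equals 2|λ|²/μ². -/

import Mathlib

open Matrix

/-- Matrix exponential on 2×2 complex matrices. -/
noncomputable def mexp (A : Matrix (Fin 2) (Fin 2) ℂ) : Matrix (Fin 2) (Fin 2) ℂ :=
  NormedSpace.exp A

/-- Pauli matrix σ^z. -/
def σz : Matrix (Fin 2) (Fin 2) ℂ := !![1, 0; 0, -1]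
/-- Pauli matrix σ^+. -/
def σp : Matrix (Fin 2) (Fin 2) ℂ := !![0, 1; 0, 0]
/-- Pauli matrix σ^-. -/
def σm : Matrix (Fin 2) (Fin 2) ℂ := !![0, 0; 1, 0]

/-- μ = √(ε² + |λ|²). -/
noncomputable def μBCS (ε : ℝ) (l : ℂ) : ℝ := Real.sqrt (ε ^ 2 + ‖l‖ ^ 2)

/-- One-site effective Hamiltonian h_λ = ε·σ^z − λ·σ^+ − (conj λ)·σ^-. -/
noncomputable def hBCS (ε : ℝ) (l : ℂ) : Matrix (Fin 2) (Fin 2) ℂ :=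
  (ε : ℂ) • σz - l • σp - (starRingEnd ℂ l) • σm

/-- One-site Gibbs density matrix ρ_λ = exp(−β h_λ)/Tr exp(−β h_λ). -/
noncomputable def ρBCS (ε β : ℝ) (l : ℂ) : Matrix (Fin 2) (Fin 2) ℂ :=
  (Matrix.trace (mexp (-(β : ℂ) • hBCS ε l)))⁻¹ • mexp (-(β : ℂ) • hBCS ε l)

/-- Spectral projection P₊ = (1/2)(1 + h_λ/μ). -/
noncomputable def Pplus (ε : ℝ) (l : ℂ) : Matrix (Fin 2) (Fin 2) ℂ :=
  (1 / 2 : ℂ) • (1 + (μBCS ε l : ℂ)⁻¹ • hBCS ε l)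

/-- Spectral projection P₋ = (1/2)(1 − h_λ/μ). -/
noncomputable def Pminus (ε : ℝ) (l : ℂ) : Matrix (Fin 2) (Fin 2) ℂ :=
  (1 / 2 : ℂ) • (1 - (μBCS ε l : ℂ)⁻¹ • hBCS ε l)

/-- E₋(A) = P₋·A·P₊. -/
noncomputable def Eminus (ε : ℝ) (l : ℂ) (A : Matrix (Fin 2) (Fin 2) ℂ) :
    Matrix (Fin 2) (Fin 2) ℂ := Pminus ε l * A * Pplus ε l

/-- E₀(A) = P₋·A·P₋ + P₊·A·P₊. -/
noncomputable def Ezero (ε : ℝ) (l : ℂ) (A : Matrix (Fin 2) (Fin 2) ℂ) :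
    Matrix (Fin 2) (Fin 2) ℂ := Pminus ε l * A * Pminus ε l + Pplus ε l * A * Pplus ε l

/-- E₊(A) = P₊·A·P₋. -/
noncomputable def Eplus (ε : ℝ) (l : ℂ) (A : Matrix (Fin 2) (Fin 2) ℂ) :
    Matrix (Fin 2) (Fin 2) ℂ := Pplus ε l * A * Pminus ε l

/-- The complex structure map J(A) = i·(E₊(A) − E₋(A)). -/
noncomputable def Jmap (ε : ℝ) (l : ℂ) (A : Matrix (Fin 2) (Fin 2) ℂ) :
    Matrix (Fin 2) (Fin 2) ℂ := Complex.I • (Eplus ε l A - Eminus ε l A)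

/-- Reduced symmetry generator σ̂^z = (E₊ + E₋)(σ^z). -/
noncomputable def σhat (ε : ℝ) (l : ℂ) : Matrix (Fin 2) (Fin 2) ℂ :=
  Eplus ε l σz + Eminus ε l σz

/-- Canonical order parameter Jσ̂^z = i·(E₊ − E₋)(σ^z). -/
noncomputable def Jσhat (ε : ℝ) (l : ℂ) : Matrix (Fin 2) (Fin 2) ℂ :=
  Jmap ε l σz

/-!
Since `μ² = ε² + |λ|²`, the Hamiltonian satisfies `h_λ² = μ²`, hence
`exp (t h_λ) = cosh (t μ) + (sinh (t μ) / μ) h_λ`. The off-diagonal part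
`σ̂^z = σ^z - (ε / μ²) h_λ` anticommutes with `h_λ` and squares to `|λ|² / μ²`, so
`σ̂^z e^{-u h_λ} σ̂^z e^{u h_λ} = (|λ|² / μ²) e^{2u h_λ}` and the integrand is
`(|λ|² / μ²) cosh ((2u - β) μ) / cosh (β μ)`. Its integral over `[0, β]` is
`(|λ|² / μ³) tanh (β μ)`.
-/

section Algebra

variable {A : Type*} [Ring A] [Algebra ℂ A] {h x : A} {m c : ℂ}

theorem spectralOffDiag_eq (hm : m ≠ 0) (hh : h * h = m ^ 2 • 1)
    (hx : h * x + x * h = (2 * c) • 1) :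
    ((1 / 2 : ℂ) • (1 + m⁻¹ • h)) * x * ((1 / 2 : ℂ) • (1 - m⁻¹ • h))
      + ((1 / 2 : ℂ) • (1 - m⁻¹ • h)) * x * ((1 / 2 : ℂ) • (1 + m⁻¹ • h))
      = x - (c / m ^ 2) • h := by
  have hxh : h * x * h = (2 * c) • h - m ^ 2 • x := by
    rw [show h * x * h = (h * x + x * h) * h - x * (h * h) by noncomm_ring, hx, hh]
    simp
  simp only [add_mul, mul_add, sub_mul, mul_sub, smul_mul_assoc, mul_smul_comm, one_mul, mul_one,
    hxh]
  match_scalars <;> field_simp <;> ring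

theorem sub_smul_mul_eq_neg_mul_sub_smul (hm : m ≠ 0) (hh : h * h = m ^ 2 • 1)
    (hx : h * x + x * h = (2 * c) • 1) :
    (x - (c / m ^ 2) • h) * h = -(h * (x - (c / m ^ 2) • h)) := by
  simp only [sub_mul, mul_sub, smul_mul_assoc, mul_smul_comm, hh, eq_sub_of_add_eq' hx]
  match_scalars <;> field_simp
  ring

theorem sub_smul_mul_self (hm : m ≠ 0) (hh : h * h = m ^ 2 • 1)
    (hx : h * x + x * h = (2 * c) • 1) :
    (x - (c / m ^ 2) • h) * (x - (c / m ^ 2) • h) = x * x - (c ^ 2 / m ^ 2) • 1 := by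
  simp only [sub_mul, mul_sub, smul_mul_assoc, mul_smul_comm, hh, eq_sub_of_add_eq' hx]
  match_scalars <;> field_simp <;> ring

end Algebra

section BanachAlgebra

variable {A : Type*} [NormedRing A] [NormedAlgebra ℂ A]

theorem IsIdempotentElem.exp_smul {P : A} (hP : IsIdempotentElem P) (c : ℂ) :
    NormedSpace.exp (c • P) = (1 - P) + Complex.exp c • P := by
  have hterm : ∀ n : ℕ, (n.factorial⁻¹ : ℂ) • (c • P) ^ n
      = ((n.factorial⁻¹ : ℂ) * c ^ n) • P + if n = 0 then 1 - P else 0 := by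
    rintro (_ | n)
    · simp
    · rw [smul_pow, hP.pow_succ_eq, smul_smul]
      simp
  have hexp : HasSum (fun n : ℕ => ((n.factorial⁻¹ : ℂ) * c ^ n) • P) (Complex.exp c • P) := by
    rw [Complex.exp_eq_exp_ℂ]
    simpa [smul_eq_mul] using (NormedSpace.exp_series_hasSum_exp' (𝕂 := ℂ) c).smul_const P
  rw [NormedSpace.exp_eq_tsum ℂ]
  beta_reduce
  rw [tsum_congr hterm, add_comm (1 - P)]
  exact (hexp.add (hasSum_ite_eq 0 (1 - P))).tsum_eq

variable [CompleteSpace A] {h : A} {m : ℂ}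

/-- `P = (1 + h / m) / 2` is idempotent and `c • h = 2cm • P - cm • 1`, so the exponential
reduces to that of a multiple of an idempotent. -/
theorem exp_smul_eq_cosh_add_sinh (hm : m ≠ 0) (hh : h * h = m ^ 2 • 1) (c : ℂ) :
    NormedSpace.exp (c • h) = Complex.cosh (c * m) • 1 + (Complex.sinh (c * m) / m) • h := by
  set P : A := (1 / 2 : ℂ) • (1 + m⁻¹ • h)
  have hP : IsIdempotentElem P := by
    simp only [IsIdempotentElem, P, smul_mul_smul_comm, mul_add, add_mul, one_mul, mul_one, hh]
    match_scalars <;> field_simp <;> ring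
  have hsplit : c • h = (2 * c * m) • P + (-(c * m)) • (1 : A) := by
    simp only [P]
    match_scalars <;> field_simp
    ring
  have hcomm : Commute ((2 * c * m) • P) ((-(c * m)) • (1 : A)) :=
    ((Commute.one_right P).smul_right _).smul_left _
  let _ : NormedAlgebra ℚ A := NormedAlgebra.restrictScalars ℚ ℂ A
  rw [hsplit, NormedSpace.exp_add_of_commute hcomm, hP.exp_smul, ← Algebra.algebraMap_eq_smul_one,
    ← NormedSpace.algebraMap_exp_comm, ← Complex.exp_eq_exp_ℂ, Algebra.algebraMap_eq_smul_one]
  have hsq : Complex.exp (2 * c * m) = Complex.exp (c * m) ^ 2 := by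
    rw [← Complex.exp_nat_mul]; ring_nf
  simp only [P, hsq, Complex.cosh, Complex.sinh, Complex.exp_neg, mul_one, mul_smul_comm, smul_add]
  match_scalars <;> field_simp <;> ring

theorem mul_exp_smul_of_anticommute {x : A} (hm : m ≠ 0) (hh : h * h = m ^ 2 • 1)
    (hx : x * h = -(h * x)) (c : ℂ) :
    x * NormedSpace.exp (c • h) = NormedSpace.exp (-c • h) * x := by
  rw [exp_smul_eq_cosh_add_sinh hm hh, exp_smul_eq_cosh_add_sinh hm hh, neg_mul,
    Complex.cosh_neg, Complex.sinh_neg]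
  simp only [mul_add, add_mul, mul_smul_comm, smul_mul_assoc, mul_one, one_mul, hx]
  module

end BanachAlgebra

namespace Matrix

variable {n : Type*} [Fintype n] [DecidableEq n] {h : Matrix n n ℂ} {m : ℂ}

open scoped Norms.Operator in
theorem exp_smul_eq_cosh_add_sinh (hm : m ≠ 0) (hh : h * h = m ^ 2 • 1) (c : ℂ) :
    NormedSpace.exp (c • h) = Complex.cosh (c * m) • 1 + (Complex.sinh (c * m) / m) • h :=
  _root_.exp_smul_eq_cosh_add_sinh hm hh c

open scoped Norms.Operator in
theorem mul_exp_smul_of_anticommute {x : Matrix n n ℂ} (hm : m ≠ 0) (hh : h * h = m ^ 2 • 1)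
    (hx : x * h = -(h * x)) (c : ℂ) :
    x * NormedSpace.exp (c • h) = NormedSpace.exp (-c • h) * x :=
  _root_.mul_exp_smul_of_anticommute hm hh hx c

theorem trace_exp_smul (hm : m ≠ 0) (hh : h * h = m ^ 2 • 1) (htr : h.trace = 0) (c : ℂ) :
    (NormedSpace.exp (c • h)).trace = Fintype.card n * Complex.cosh (c * m) := by
  rw [exp_smul_eq_cosh_add_sinh hm hh, trace_add, trace_smul, trace_smul, htr, trace_one]
  simp [mul_comm]

theorem exp_smul_mul_exp_smul (h : Matrix n n ℂ) (a b : ℂ) :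
    NormedSpace.exp (a • h) * NormedSpace.exp (b • h) = NormedSpace.exp ((a + b) • h) := by
  rw [add_smul, exp_add_of_commute _ _ ((Commute.refl h).smul_left a |>.smul_right b)]

end Matrix

theorem integral_cosh_two_mul_sub {μ : ℝ} (hμ : μ ≠ 0) (β : ℝ) :
    ∫ u in (0 : ℝ)..β, Real.cosh ((2 * u - β) * μ) = Real.sinh (β * μ) / μ := by
  have hderiv : ∀ u : ℝ, HasDerivAt (fun u => Real.sinh ((2 * u - β) * μ) / (2 * μ))
      (Real.cosh ((2 * u - β) * μ)) u := by
    intro u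
    refine ((((hasDerivAt_id' u).const_mul 2).sub_const β).mul_const μ).sinh.div_const (2 * μ)
      |>.congr_deriv ?_
    field_simp
  have hcont : Continuous fun u => Real.cosh ((2 * u - β) * μ) := by fun_prop
  rw [intervalIntegral.integral_eq_sub_of_hasDerivAt (fun u _ => hderiv u)
    (hcont.intervalIntegrable _ _)]
  rw [show (2 * β - β) * μ = β * μ by ring, show (2 * 0 - β) * μ = -(β * μ) by ring,
    Real.sinh_neg]
  field_simp
  ring

section BCS

variable (ε : ℝ) (l : ℂ)

theorem hBCS_eq : hBCS ε l = !![(ε : ℂ), -l; -(starRingEnd ℂ l), -(ε : ℂ)] := by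
  ext i j
  fin_cases i <;> fin_cases j <;> simp [hBCS, σz, σp, σm]

theorem μBCS_sq : μBCS ε l ^ 2 = ε ^ 2 + ‖l‖ ^ 2 :=
  Real.sq_sqrt (by positivity)

theorem hBCS_mul_self : hBCS ε l * hBCS ε l = (μBCS ε l : ℂ) ^ 2 • 1 := by
  have hμsq : (μBCS ε l : ℂ) ^ 2 = (ε : ℂ) ^ 2 + l * starRingEnd ℂ l := by
    rw [Complex.mul_conj', ← Complex.ofReal_pow, μBCS_sq]; push_cast; ring
  rw [hμsq, hBCS_eq]
  ext i j
  fin_cases i <;> fin_cases j <;> simp [mul_apply, Fin.sum_univ_two, one_apply] <;> ring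

theorem trace_hBCS : (hBCS ε l).trace = 0 := by
  simp [hBCS_eq, trace_fin_two]

theorem hBCS_mul_σz_add_σz_mul : hBCS ε l * σz + σz * hBCS ε l = (2 * (ε : ℂ)) • 1 := by
  rw [hBCS_eq, σz]
  ext i j
  fin_cases i <;> fin_cases j <;> simp [one_apply] <;> ring

theorem σz_mul_self : σz * σz = 1 := by
  rw [σz]
  ext i j
  fin_cases i <;> fin_cases j <;> simp [one_apply]

variable {ε}

theorem μBCS_pos (hε : 0 < ε) : 0 < μBCS ε l :=
  Real.sqrt_pos.2 (by positivity)

theorem σhat_eq (hμ : μBCS ε l ≠ 0) :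
    σhat ε l = σz - ((ε : ℂ) / (μBCS ε l : ℂ) ^ 2) • hBCS ε l :=
  spectralOffDiag_eq (Complex.ofReal_ne_zero.2 hμ) (hBCS_mul_self ε l)
    (hBCS_mul_σz_add_σz_mul ε l)

theorem σhat_mul_hBCS (hμ : μBCS ε l ≠ 0) :
    σhat ε l * hBCS ε l = -(hBCS ε l * σhat ε l) := by
  rw [σhat_eq l hμ]
  exact sub_smul_mul_eq_neg_mul_sub_smul (Complex.ofReal_ne_zero.2 hμ)
    (hBCS_mul_self ε l) (hBCS_mul_σz_add_σz_mul ε l)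

theorem σhat_mul_self (hμ : μBCS ε l ≠ 0) :
    σhat ε l * σhat ε l = ((‖l‖ ^ 2 / μBCS ε l ^ 2 : ℝ) : ℂ) • 1 := by
  have hμc : (μBCS ε l : ℂ) ≠ 0 := Complex.ofReal_ne_zero.2 hμ
  rw [σhat_eq l hμ, sub_smul_mul_self hμc (hBCS_mul_self ε l)
    (hBCS_mul_σz_add_σz_mul ε l), σz_mul_self]
  have hcoef : 1 - (ε : ℂ) ^ 2 / (μBCS ε l : ℂ) ^ 2 = ((‖l‖ ^ 2 / μBCS ε l ^ 2 : ℝ) : ℂ) := by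
    rw [eq_sub_of_add_eq' (μBCS_sq ε l).symm]
    push_cast
    field_simp
  rw [← hcoef, sub_smul, one_smul]

theorem trace_duhamel_integrand (hμ : μBCS ε l ≠ 0) (β u : ℝ) :
    trace (ρBCS ε β l * σhat ε l * mexp ((-(u : ℂ)) • hBCS ε l) * σhat ε l *
        mexp ((u : ℂ) • hBCS ε l)) =
      ((‖l‖ ^ 2 / μBCS ε l ^ 2 * (Real.cosh ((2 * u - β) * μBCS ε l) /
        Real.cosh (β * μBCS ε l)) : ℝ) : ℂ) := by
  have hμc : (μBCS ε l : ℂ) ≠ 0 := Complex.ofReal_ne_zero.2 hμ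
  have hh := hBCS_mul_self ε l
  have hswap : ∀ c : ℂ, σhat ε l * mexp (c • hBCS ε l) = mexp (-c • hBCS ε l) * σhat ε l :=
    Matrix.mul_exp_smul_of_anticommute hμc hh (σhat_mul_hBCS l hμ)
  have hsandwich : σhat ε l * mexp ((-(u : ℂ)) • hBCS ε l) * σhat ε l * mexp ((u : ℂ) • hBCS ε l)
      = ((‖l‖ ^ 2 / μBCS ε l ^ 2 : ℝ) : ℂ) • mexp ((2 * u : ℂ) • hBCS ε l) := calc
    _ = σhat ε l * mexp ((-(u : ℂ) + -(u : ℂ)) • hBCS ε l) * σhat ε l := by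
      rw [mul_assoc _ (σhat ε l) (mexp _), hswap (u : ℂ)]
      simp only [mexp, ← Matrix.exp_smul_mul_exp_smul, mul_assoc]
    _ = mexp ((2 * u : ℂ) • hBCS ε l) * (σhat ε l * σhat ε l) := by
      rw [hswap, mul_assoc]
      congr 3
      ring
    _ = _ := by rw [σhat_mul_self l hμ, mul_smul_comm, mul_one]
  simp only [mul_assoc] at hsandwich ⊢
  rw [hsandwich, ρBCS, smul_mul_assoc, mul_smul_comm, mexp, mexp, Matrix.exp_smul_mul_exp_smul,
    trace_smul, trace_smul, Matrix.trace_exp_smul hμc hh (trace_hBCS ε l),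
    Matrix.trace_exp_smul hμc hh (trace_hBCS ε l), neg_mul, Complex.cosh_neg, Fintype.card_fin]
  have hcosh : Complex.cosh ((β : ℂ) * μBCS ε l) ≠ 0 := by
    exact_mod_cast (Real.cosh_pos (β * μBCS ε l)).ne'
  push_cast
  simp only [smul_eq_mul]
  field_simp
  ring_nf

theorem integral_duhamel_integrand (hμ : μBCS ε l ≠ 0) (β : ℝ) :
    (∫ u in (0 : ℝ)..β,
        trace (ρBCS ε β l * σhat ε l * mexp ((-(u : ℂ)) • hBCS ε l) * σhat ε l *
          mexp ((u : ℂ) • hBCS ε l))) =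
      ((‖l‖ ^ 2 / μBCS ε l ^ 3 * Real.tanh (β * μBCS ε l) : ℝ) : ℂ) := by
  simp_rw [trace_duhamel_integrand l hμ β]
  rw [intervalIntegral.integral_ofReal, intervalIntegral.integral_const_mul,
    intervalIntegral.integral_div, integral_cosh_two_mul_sub hμ,
    Real.tanh_eq_sinh_div_cosh]
  congr 1
  field_simp

end BCS

theorem bcs_duhamel_correlation_general
    (ε β : ℝ) (hε : ε ∈ Set.Ioo (0 : ℝ) (1 / 2)) (l : ℂ) :
    (∫ u in (0 : ℝ)..β,
        Matrix.trace (ρBCS ε β l * σhat ε l * mexp ((-(u : ℂ)) • hBCS ε l) * σhat ε l *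
          mexp ((u : ℂ) • hBCS ε l))) =
      ((‖l‖ ^ 2 / μBCS ε l ^ 3 * Real.tanh (β * μBCS ε l) : ℝ) : ℂ) ∧
    (l ≠ 0 → Real.tanh (β * μBCS ε l) = 2 * μBCS ε l →
      (∫ u in (0 : ℝ)..β,
          Matrix.trace (ρBCS ε β l * σhat ε l * mexp ((-(u : ℂ)) • hBCS ε l) * σhat ε l *
            mexp ((u : ℂ) • hBCS ε l))) =
        ((2 * ‖l‖ ^ 2 / μBCS ε l ^ 2 : ℝ) : ℂ)) := by
  have hμ : μBCS ε l ≠ 0 := (μBCS_pos l hε.1).ne'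
  refine ⟨integral_duhamel_integrand l hμ β, fun _ hgap => ?_⟩
  rw [integral_duhamel_integrand l hμ β, hgap]
  congr 1
  field_simp

/-- the Duhamel (canonical) correlation of the reduced symmetry generator:
∫₀^β Tr(ρ_λ·σ̂^z·exp(−uh_λ)·σ̂^z·exp(uh_λ)) du = (|λ|²/μ³)·tanh(βμ); if λ ≠ 0 satisfies
the gap equation tanh(βμ) = 2μ, this quantization parameter equals 2|λ|²/μ². -/
theorem bcs_duhamel_correlation
    (ε β : ℝ) (hε : ε ∈ Set.Ioo (0 : ℝ) (1 / 2)) (hβ : 0 < β) (l : ℂ) :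
    (∫ u in (0 : ℝ)..β,
        Matrix.trace (ρBCS ε β l * σhat ε l * mexp ((-(u : ℂ)) • hBCS ε l) * σhat ε l *
          mexp ((u : ℂ) • hBCS ε l))) =
      ((‖l‖ ^ 2 / μBCS ε l ^ 3 * Real.tanh (β * μBCS ε l) : ℝ) : ℂ) ∧
    (l ≠ 0 → Real.tanh (β * μBCS ε l) = 2 * μBCS ε l →
      (∫ u in (0 : ℝ)..β,
          Matrix.trace (ρBCS ε β l * σhat ε l * mexp ((-(u : ℂ)) • hBCS ε l) * σhat ε l *
            mexp ((u : ℂ) • hBCS ε l))) =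
        ((2 * ‖l‖ ^ 2 / μBCS ε l ^ 2 : ℝ) : ℂ)) :=
  bcs_duhamel_correlation_general ε β hε l
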